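/- arXiv:1009.0562 — 4 statements merged into one kernel-verified Lean document; each statement's English description precedes it below -/
import Mathlib

section
/- For all real u > 1, the function g(u) = (1 - 1/u) * exp(2/(2u-1)) is strictly increasing in u. -/
/-! The derivative of `g` is `exp (2 / (2u - 1)) / (u² (2u - 1)²)`, which is positive: the
product rule gives `exp (2 / (2u - 1)) · ((2u - 1)² - 4u(u - 1)) / (u² (2u - 1)²)`, and the
numerator `(2u - 1)² - 4u(u - 1)` is identically `1`. -/

open Real Set

theorem hasDerivAt_one_sub_inv_mul_exp {u : ℝ} (hu : u ≠ 0) (hu' : 2 * u - 1 ≠ 0) :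
    HasDerivAt (fun u : ℝ => (1 - 1 / u) * exp (2 / (2 * u - 1)))
      (exp (2 / (2 * u - 1)) / (u ^ 2 * (2 * u - 1) ^ 2)) u := by
  have hfactor : HasDerivAt (fun u : ℝ => 1 - 1 / u) (1 / u ^ 2) u := by
    simpa using (hasDerivAt_inv hu).const_sub 1
  have hlinear : HasDerivAt (fun u : ℝ => 2 * u - 1) 2 u := by
    simpa using ((hasDerivAt_id u).const_mul 2).sub_const 1
  have hexponent : HasDerivAt (fun u : ℝ => 2 / (2 * u - 1)) (-4 / (2 * u - 1) ^ 2) u :=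
    ((hasDerivAt_const u (2 : ℝ)).fun_div hlinear hu').congr_deriv (by ring)
  refine (hfactor.fun_mul hexponent.exp).congr_deriv ?_
  field_simp [show u * 2 - 1 ≠ 0 by rwa [mul_comm]]
  ring

theorem stmt_0 :
    StrictMonoOn (fun u : ℝ => (1 - 1 / u) * Real.exp (2 / (2 * u - 1)))
      (Set.Ioi (1 : ℝ)) := by
  have hderiv (u : ℝ) (hu : 1 < u) := hasDerivAt_one_sub_inv_mul_exp (u := u)
    (by positivity) (by linarith)
  refine strictMonoOn_of_deriv_pos (convex_Ioi 1)
    (fun u hu => (hderiv u hu).continuousAt.continuousWithinAt) fun u hu => ?_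
  rw [interior_Ioi, mem_Ioi] at hu
  have : 0 < u := by linarith
  have : 0 < 2 * u - 1 := by linarith
  rw [(hderiv u hu).deriv]
  positivity
end

section
/- For all real u > 1, (1 - 1/u) * exp(2/(2u-1)) < 1. -/
/-!
With `a = u - 1`, the claim says `2 / (2a + 1) < log (1 + a⁻¹)`. The right side is the series
`∑ₖ 2 / (2k + 1) · (2a + 1)^{-(2k + 1)}` of positive terms, whose first term is the left side.
-/

open Real

theorem two_div_two_mul_add_one_lt_log_one_add_inv {a : ℝ} (ha : 0 < a) :
    2 / (2 * a + 1) < log (1 + a⁻¹) := by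
  calc 2 / (2 * a + 1)
      < ∑ k ∈ Finset.range 2, 2 * (1 / (2 * (k : ℝ) + 1)) * (1 / (2 * a + 1)) ^ (2 * k + 1) := by
        simp only [Finset.sum_range_succ, Finset.sum_range_zero]
        rw [div_eq_mul_inv 2]
        norm_num
        positivity
    _ ≤ log (1 + a⁻¹) := sum_le_hasSum _ (fun k _ => by positivity) (hasSum_log_one_add_inv ha)

theorem exp_two_div_two_mul_add_one_lt {a : ℝ} (ha : 0 < a) :
    exp (2 / (2 * a + 1)) < 1 + a⁻¹ := by
  calc exp (2 / (2 * a + 1)) < exp (log (1 + a⁻¹)) :=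
        exp_lt_exp.2 (two_div_two_mul_add_one_lt_log_one_add_inv ha)
    _ = 1 + a⁻¹ := exp_log (by positivity)

theorem stmt_1 (u : ℝ) (hu : 1 < u) :
    (1 - 1 / u) * Real.exp (2 / (2 * u - 1)) < 1 := by
  have ha : 0 < u - 1 := sub_pos.2 hu
  have hexp : exp (2 / (2 * u - 1)) < u / (u - 1) := by
    convert exp_two_div_two_mul_add_one_lt ha using 2
    · ring
    · field_simp; ring
  calc (1 - 1 / u) * exp (2 / (2 * u - 1)) < (1 - 1 / u) * (u / (u - 1)) :=
        mul_lt_mul_of_pos_left hexp (by rw [one_sub_div (by positivity)]; positivity)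
    _ = 1 := by field_simp
end

section
/- Let X be a chi-squared random variable with ℓ ≥ 3 degrees of freedom. Then for every t with 0 < t < ℓ - 2, P(X ≤ t) ≤ P(X ≥ 2ℓ - 4 - t). -/
/-!
Writing `μ = (a - 1) / r` for the mode of the gamma density `f(x) ∝ x ^ (a - 1) e ^ (-r x)`,
one has `f x ≤ f (2μ - x)` for every `x ≤ μ`: with `x = μ (1 - u)` this reduces to
`2u ≤ log (1 + u) - log (1 - u) = 2 artanh u`, whose Taylor series has nonnegative terms.
Reflecting the left tail below `t` through `μ` then lands inside the right tail above `2μ - t`.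
For `χ²_ℓ = Γ(ℓ / 2, 1 / 2)` the mode is `ℓ - 2`.
-/

open MeasureTheory ProbabilityTheory Real Set

lemma two_mul_le_log_one_add_sub_log_one_sub {u : ℝ} (hu₀ : 0 ≤ u) (hu₁ : u < 1) :
    2 * u ≤ log (1 + u) - log (1 - u) := by
  have hsum := hasSum_log_sub_log_of_abs_lt_one (abs_lt.mpr ⟨by linarith, hu₁⟩)
  simpa using le_hasSum hsum 0 fun k _ ↦ by positivity

lemma withDensity_Iic_le_withDensity_Ici_of_le_reflect {f : ℝ → ENNReal} (hf : Measurable f)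
    {c t : ℝ} (hfc : ∀ x ≤ t, f x ≤ f (2 * c - x)) :
    volume.withDensity f (Iic t) ≤ volume.withDensity f (Ici (2 * c - t)) := by
  have hpre : (fun x ↦ 2 * c - x) ⁻¹' Ici (2 * c - t) = Iic t := by
    ext x; simp
  rw [withDensity_apply _ measurableSet_Iic, withDensity_apply _ measurableSet_Ici]
  calc ∫⁻ x in Iic t, f x
      ≤ ∫⁻ x in Iic t, f (2 * c - x) := setLIntegral_mono (hf.comp (by fun_prop)) hfc
    _ = ∫⁻ y in Ici (2 * c - t), f y := by
      rw [← hpre]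
      exact (Measure.measurePreserving_sub_left volume (2 * c)).setLIntegral_comp_preimage
        measurableSet_Ici hf

lemma two_mul_sub_div_le_log_reflect_sub_log {μ x : ℝ} (hx : 0 < x) (hxμ : x ≤ μ) :
    2 * ((μ - x) / μ) ≤ log (2 * μ - x) - log x := by
  have hμ : 0 < μ := hx.trans_le hxμ
  have h := two_mul_le_log_one_add_sub_log_one_sub (u := (μ - x) / μ)
    (div_nonneg (by linarith) hμ.le) ((div_lt_one hμ).mpr (by linarith))
  have hplus : 1 + (μ - x) / μ = (2 * μ - x) / μ := by field_simp; ring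
  have hminus : 1 - (μ - x) / μ = x / μ := by field_simp; ring
  rwa [hplus, hminus, log_div (by linarith) hμ.ne', log_div hx.ne' hμ.ne',
    sub_sub_sub_cancel_right] at h

lemma gammaPDFReal_le_gammaPDFReal_reflect {a r x : ℝ} (ha : 1 < a) (hr : 0 < r)
    (hx : x ≤ (a - 1) / r) :
    gammaPDFReal a r x ≤ gammaPDFReal a r (2 * ((a - 1) / r) - x) := by
  set μ := (a - 1) / r
  have hμ : 0 < μ := div_pos (by linarith) hr
  rcases le_or_gt x 0 with hx₀ | hx₀
  · have hzero : gammaPDFReal a r x = 0 := by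
      rcases hx₀.lt_or_eq with hneg | rfl
      · simp [gammaPDFReal, not_le.mpr hneg]
      · simp [gammaPDFReal, zero_rpow (sub_ne_zero.mpr ha.ne')]
    rw [hzero]
    exact gammaPDFReal_nonneg (by linarith) hr _
  have hy : 0 < 2 * μ - x := by linarith
  simp only [gammaPDFReal, if_pos hx₀.le, if_pos hy.le, mul_assoc]
  gcongr _ * ?_
  rw [rpow_def_of_pos hx₀, rpow_def_of_pos hy, ← exp_add, ← exp_add, exp_le_exp]
  have hlog := mul_le_mul_of_nonneg_left (two_mul_sub_div_le_log_reflect_sub_log hx₀ hx)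
    (by linarith : (0 : ℝ) ≤ a - 1)
  have hslope : (a - 1) * (2 * ((μ - x) / μ)) = r * ((2 * μ - x) - x) := by
    have hrμ : a - 1 = r * μ := (mul_div_cancel₀ _ hr.ne').symm
    rw [hrμ]
    field_simp
    ring
  linarith

lemma gammaMeasure_Iic_le_gammaMeasure_Ici_reflect {a r t : ℝ} (ha : 1 < a) (hr : 0 < r)
    (ht : t ≤ (a - 1) / r) :
    gammaMeasure a r (Iic t) ≤ gammaMeasure a r (Ici (2 * ((a - 1) / r) - t)) :=
  withDensity_Iic_le_withDensity_Ici_of_le_reflect (measurable_gammaPDFReal a r).ennreal_ofReal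
    fun _ hx ↦ ENNReal.ofReal_le_ofReal
      (gammaPDFReal_le_gammaPDFReal_reflect ha hr (hx.trans ht))

theorem stmt_2_general (ℓ : ℕ) (hℓ : 3 ≤ ℓ) (t : ℝ) (ht' : t < (ℓ : ℝ) - 2) :
    gammaMeasure ((ℓ : ℝ) / 2) (1 / 2) {x | x ≤ t} ≤
      gammaMeasure ((ℓ : ℝ) / 2) (1 / 2) {x | 2 * (ℓ : ℝ) - 4 - t ≤ x} := by
  have hmode : ((ℓ : ℝ) / 2 - 1) / (1 / 2) = ℓ - 2 := by ring
  have hℓ' : (3 : ℝ) ≤ ℓ := by exact_mod_cast hℓ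
  have h := gammaMeasure_Iic_le_gammaMeasure_Ici_reflect (a := (ℓ : ℝ) / 2) (r := 1 / 2)
    (by linarith) (by norm_num) (hmode ▸ ht'.le)
  rw [hmode] at h
  change gammaMeasure _ _ (Iic t) ≤ gammaMeasure _ _ (Ici (2 * (ℓ : ℝ) - 4 - t))
  convert h using 3
  ring

theorem stmt_2 (ℓ : ℕ) (hℓ : 3 ≤ ℓ) (t : ℝ) (ht : 0 < t) (ht' : t < (ℓ : ℝ) - 2) :
    gammaMeasure ((ℓ : ℝ) / 2) (1 / 2) {x | x ≤ t} ≤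
      gammaMeasure ((ℓ : ℝ) / 2) (1 / 2) {x | 2 * (ℓ : ℝ) - 4 - t ≤ x} :=
  stmt_2_general ℓ hℓ t ht'
end

section
/- Let f be the density of a chi-squared distribution with ℓ ≥ 3 degrees of freedom. Then for all s with 0 < s < ℓ - 2, f(s) ≤ f(2ℓ - 4 - s). -/
/-!
Up to its normalising constant the density is `s ^ a * exp (-(b * s))` with `a = ℓ / 2 - 1` and
`b = 1 / 2`, whose mode is `a / b = ℓ - 2`. For `0 < s ≤ t` with `s + t = 2 a / b`, taking logarithms
reduces `f s ≤ f t` to `b (t - s) ≤ a (log t - log s)`. With `x = (t - s) / (t + s)` the left side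
is `2 a x`, while `log t - log s = log (1 + x) - log (1 - x) = 2 (x + x ^ 3 / 3 + x ^ 5 / 5 + ⋯) ≥ 2 x`.
-/

/-- The density of the chi-squared distribution with `ℓ` degrees of freedom. -/
noncomputable def chiSqPDF (ℓ : ℕ) (s : ℝ) : ℝ :=
  s ^ ((ℓ : ℝ) / 2 - 1) * Real.exp (-s / 2) /
    (2 ^ ((ℓ : ℝ) / 2) * Real.Gamma ((ℓ : ℝ) / 2))

open Real

lemma two_mul_le_log_one_add_sub_log_one_sub_s3 {x : ℝ} (hx0 : 0 ≤ x) (hx1 : x < 1) :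
    2 * x ≤ log (1 + x) - log (1 - x) := by
  have hx : |x| < 1 := by rwa [abs_of_nonneg hx0]
  simpa using le_hasSum (hasSum_log_sub_log_of_abs_lt_one hx) 0 fun _ _ => by positivity

lemma two_mul_sub_div_add_le_log_sub_log {s t : ℝ} (hs : 0 < s) (hst : s ≤ t) :
    2 * ((t - s) / (t + s)) ≤ log t - log s := by
  have hsum : 0 < t + s := by linarith
  have hx0 : 0 ≤ (t - s) / (t + s) := div_nonneg (by linarith) hsum.le
  have hx1 : (t - s) / (t + s) < 1 := (div_lt_one hsum).2 (by linarith)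
  have hplus : 1 + (t - s) / (t + s) = t * (2 / (t + s)) := by field_simp; ring
  have hminus : 1 - (t - s) / (t + s) = s * (2 / (t + s)) := by field_simp; ring
  have hc : 2 / (t + s) ≠ 0 := by positivity
  calc 2 * ((t - s) / (t + s))
      ≤ log (1 + (t - s) / (t + s)) - log (1 - (t - s) / (t + s)) :=
        two_mul_le_log_one_add_sub_log_one_sub_s3 hx0 hx1
    _ = log t - log s := by
        rw [hplus, hminus, log_mul (by linarith) hc, log_mul hs.ne' hc]
        ring

lemma rpow_mul_exp_neg_mul_le_of_add_eq {a b s t : ℝ} (ha : 0 ≤ a) (hs : 0 < s) (hst : s ≤ t)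
    (hmode : b * (s + t) = 2 * a) :
    s ^ a * exp (-(b * s)) ≤ t ^ a * exp (-(b * t)) := by
  have ht : 0 < t := hs.trans_le hst
  have hlog := mul_le_mul_of_nonneg_left (two_mul_sub_div_add_le_log_sub_log hs hst) ha
  have hb : b * (t - s) = a * (2 * ((t - s) / (t + s))) := by
    field_simp
    linear_combination (t - s) * hmode
  rw [rpow_def_of_pos hs, rpow_def_of_pos ht, ← exp_add, ← exp_add, exp_le_exp]
  linarith

theorem stmt_3_general (ℓ : ℕ) (s : ℝ) (hs : 0 < s) (hs' : s < (ℓ : ℝ) - 2) :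
    chiSqPDF ℓ s ≤ chiSqPDF ℓ (2 * (ℓ : ℝ) - 4 - s) := by
  have hnorm : 0 ≤ 2 ^ ((ℓ : ℝ) / 2) * Gamma ((ℓ : ℝ) / 2) := by
    have := Gamma_pos_of_pos (by linarith : 0 < (ℓ : ℝ) / 2)
    positivity
  have hkernel := rpow_mul_exp_neg_mul_le_of_add_eq (a := (ℓ : ℝ) / 2 - 1) (b := 1 / 2)
    (t := 2 * (ℓ : ℝ) - 4 - s) (by linarith) hs (by linarith) (by ring)
  have hhalf (x : ℝ) : -x / 2 = -(1 / 2 * x) := by ring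
  unfold chiSqPDF
  rw [hhalf, hhalf]
  gcongr

theorem stmt_3 (ℓ : ℕ) (hℓ : 3 ≤ ℓ) (s : ℝ) (hs : 0 < s) (hs' : s < (ℓ : ℝ) - 2) :
    chiSqPDF ℓ s ≤ chiSqPDF ℓ (2 * (ℓ : ℝ) - 4 - s) :=
  stmt_3_general ℓ s hs hs'
end
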